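/- Let S = k[[t⁴, t⁵, t¹¹]] ≅ k[[X,Y,Z]]/(Z²−X³Y², Y³−XZ, X⁴−YZ) with maximal ideal m. Then the integral closures of powers of m satisfy: closure(m²) = m² + (t¹¹) and closure(m^n) = m^n for all n ≥ 3. -/

import Mathlib

set_option synthInstance.maxHeartbeats 1000000
set_option maxHeartbeats 2000000

open IsLocalRing Polynomial Finset

variable {R : Type*}

/-- `x` is integral over the ideal `I`: it satisfies an equation
`x^n + a₁ x^{n-1} + ⋯ + aₙ = 0` with `aᵢ ∈ Iⁱ`. -/
def IsIntegralOverIdeal [CommRing R] (I : Ideal R) (x : R) : Prop :=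
  ∃ n : ℕ, 0 < n ∧ ∃ a : ℕ → R, (∀ i ∈ Finset.Icc 1 n, a i ∈ I ^ i) ∧
    x ^ n + ∑ i ∈ Finset.Icc 1 n, a i * x ^ (n - i) = 0

/-- The integral closure of an ideal (the set of integral elements is an ideal,
so the span equals it). -/
def intCl [CommRing R] (I : Ideal R) : Ideal R :=
  Ideal.span {x | IsIntegralOverIdeal I x}

/-- Length of a module, as the Krull dimension of its lattice of submodules. -/
noncomputable def mlen (R M : Type*) [CommRing R] [AddCommGroup M] [Module R M] :
    WithBot ℕ∞ :=
  Order.krullDim (Submodule R M)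

/-- The quotient module `N/(K ∩ N)` for ideals `N K`. -/
abbrev idealQuot [CommRing R] (N K : Ideal R) :=
  N ⧸ (Submodule.comap N.subtype K)

/-- Depth of `M` with respect to the ideal `J`: sup of lengths of `M`-regular
sequences contained in `J`. -/
noncomputable def rdepth (A : Type*) [CommRing A] (J : Ideal A)
    (M : Type*) [AddCommGroup M] [Module A M] : ℕ∞ :=
  sSup {n : ℕ∞ | ∃ rs : List A, (rs.length : ℕ∞) = n ∧ (∀ x ∈ rs, x ∈ J) ∧
    RingTheory.Sequence.IsRegular M rs}

/-- A local ring is Cohen-Macaulay if its depth equals its Krull dimension. -/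
def IsCMLocal (R : Type*) [CommRing R] [IsLocalRing R] : Prop :=
  (rdepth R (maximalIdeal R) R : WithBot ℕ∞) = ringKrullDim R

/-- A local ring is analytically unramified if its `m`-adic completion is reduced. -/
def AnalyticallyUnramified (R : Type*) [CommRing R] [IsLocalRing R] : Prop :=
  IsReduced (AdicCompletion (maximalIdeal R) R)

/-- An ideal is `m`-primary. -/
def IsMPrimary [CommRing R] [IsLocalRing R] (I : Ideal R) : Prop :=
  I.radical = maximalIdeal R

/-- `J ⊆ I` is a minimal reduction: generated by `d = dim R` elements and
`I^{n+1} = J I^n` for `n ≫ 0`. -/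
def IsMinimalReduction [CommRing R] (d : ℕ) (J I : Ideal R) : Prop :=
  J ≤ I ∧ (∃ s : Fin d → R, J = Ideal.span (Set.range s)) ∧
    ∃ N : ℕ, ∀ n ≥ N, I ^ (n + 1) = J * I ^ n

/-- Normal Hilbert data: `L n = λ(R/ intCl(I^{n+1}))` and for `n ≫ 0` this agrees
with the polynomial whose normalized coefficients are the `e i`. -/
def NormalHilbertData [CommRing R] (d : ℕ) (I : Ideal R) (L : ℕ → ℕ) (e : ℕ → ℤ) : Prop :=
  (∀ n, mlen R (R ⧸ intCl (I ^ (n + 1))) = (L n : WithBot ℕ∞)) ∧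
    ∃ N : ℕ, ∀ n ≥ N, (L n : ℤ) =
      ∑ i ∈ Finset.range (d + 1), (-1 : ℤ) ^ i * e i * ((n + d - i).choose (d - i))

/-- `t` is the Cohen-Macaulay type of the local ring `R` of dimension `d`:
`t = λ((Q : m)/Q)` for every ideal `Q` generated by a maximal regular sequence in `m`. -/
def CMTypeData (R : Type*) [CommRing R] [IsLocalRing R] (d t : ℕ) : Prop :=
  ∀ s : List R, s.length = d → (∀ x ∈ s, x ∈ maximalIdeal R) →
    RingTheory.Sequence.IsRegular R s →
      mlen R (idealQuot ((Ideal.span {x | x ∈ s}).colon (maximalIdeal R))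
        (Ideal.span {x | x ∈ s})) = (t : WithBot ℕ∞)

/-- The quotient module `N/(K ∩ N)` for submodules `N K` of a module. -/
abbrev submoduleQuot {A M : Type*} [CommRing A] [AddCommGroup M] [Module A M]
    (N K : Submodule A M) :=
  N ⧸ (Submodule.comap N.subtype K)

/-!
Substituting `X, Y, Z ↦ t⁴, t⁵, t¹¹` kills the relations, so it descends to a `k`-algebra map
`g : S → k[[t]]` sending `m ^ n` into `(t ^ 4n)`. Principal ideals of `k[[t]]` are integrally
closed, so `g` also sends the integral closure of `m ^ n` into `(t ^ 4n)`.

Modulo `m ^ n`, `S` is spanned over `k` by the standard monomials `xᵃ, xᵃy, xᵃy², xᵃz` (the Apéry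
set `{0, 5, 10, 11}` of `⟨4, 5, 11⟩` with respect to `4`, shifted by multiples of `4`), and `g`
maps them to pairwise distinct powers of `t`. Hence an element of the integral closure of `m ^ n`
is, modulo `m ^ n`, a combination of standard monomials of `t`-order at least `4n`. These lie in
`m ^ n` when `n ≥ 3`, and in `m² + (z)` when `n = 2`; conversely `z² = x³y² ∈ (m²)²`.
-/

theorem IsIntegralOverIdeal.of_pow_mem [CommRing R] {I : Ideal R} {u : R} {n : ℕ} (hn : 0 < n)
    (h : u ^ n ∈ I ^ n) : IsIntegralOverIdeal I u := by
  refine ⟨n, hn, fun i => if i = n then -u ^ n else 0, fun i _ => ?_, ?_⟩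
  · dsimp only
    split_ifs with hi
    · subst hi
      exact neg_mem h
    · exact zero_mem _
  · simp [Finset.sum_ite_eq', Nat.one_le_iff_ne_zero.mpr hn.ne']

theorem le_intCl [CommRing R] (I : Ideal R) : I ≤ intCl I := fun u hu =>
  Ideal.subset_span (IsIntegralOverIdeal.of_pow_mem one_pos (by simpa using hu))

theorem IsIntegralOverIdeal.map {S F : Type*} [CommRing R] [CommRing S] [FunLike F R S]
    [RingHomClass F R S] (g : F) {I : Ideal R} {u : R} (h : IsIntegralOverIdeal I u) :
    IsIntegralOverIdeal (I.map g) (g u) := by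
  obtain ⟨n, hn, a, ha, heq⟩ := h
  refine ⟨n, hn, fun i => g (a i), fun i hi => ?_, by simpa using congrArg g heq⟩
  rw [← Ideal.map_pow]
  exact Ideal.mem_map_of_mem g (ha i hi)

theorem IsIntegralOverIdeal.mono [CommRing R] {I J : Ideal R} (hIJ : I ≤ J) {u : R}
    (h : IsIntegralOverIdeal I u) : IsIntegralOverIdeal J u := by
  obtain ⟨n, hn, a, ha, heq⟩ := h
  exact ⟨n, hn, a, fun i hi => Ideal.pow_right_mono hIJ i (ha i hi), heq⟩

theorem PowerSeries.X_pow_dvd_of_isIntegralOverIdeal {k : Type*} [CommRing k] [IsReduced k]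
    {d : ℕ} {u : PowerSeries k} (h : IsIntegralOverIdeal (Ideal.span {PowerSeries.X ^ d}) u) :
    PowerSeries.X ^ d ∣ u := by
  obtain ⟨N, hN, a, ha, heq⟩ := h
  have ha' : ∀ i ∈ Icc 1 N, PowerSeries.X ^ (d * i) ∣ a i := fun i hi => by
    simpa [Ideal.span_singleton_pow, ← pow_mul, Ideal.mem_span_singleton] using ha i hi
  suffices ∀ j ≤ d, PowerSeries.X ^ j ∣ u from this d le_rfl
  intro j
  induction j with
  | zero => simp
  | succ j ih =>
    intro hj
    obtain ⟨w, rfl⟩ := ih (by omega)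
    have hlead : PowerSeries.coeff (j * N) ((PowerSeries.X ^ j * w) ^ N) =
        PowerSeries.constantCoeff w ^ N := by
      rw [mul_pow, ← pow_mul]
      simpa using PowerSeries.coeff_X_pow_mul (w ^ N) (j * N) 0
    -- each other term is divisible by `t ^ (d * i + j * (N - i))`, and `j * N` is smaller
    have hrest : ∀ i ∈ Icc 1 N,
        PowerSeries.coeff (j * N) (a i * (PowerSeries.X ^ j * w) ^ (N - i)) = 0 := by
      intro i hi
      obtain ⟨hi1, hiN⟩ := Finset.mem_Icc.mp hi
      have hdvd : PowerSeries.X ^ (d * i + j * (N - i)) ∣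
          a i * (PowerSeries.X ^ j * w) ^ (N - i) := by
        rw [pow_add, mul_pow, ← pow_mul]
        exact mul_dvd_mul (ha' i hi) (dvd_mul_right _ _)
      refine PowerSeries.X_pow_dvd_iff.mp hdvd _ ?_
      have : j * i < d * i := Nat.mul_lt_mul_of_pos_right (by omega) hi1
      have : j * (N - i) + j * i = j * N := by rw [← Nat.mul_add, Nat.sub_add_cancel hiN]
      omega
    have hw : PowerSeries.constantCoeff w ^ N = 0 := by
      simpa [hlead, Finset.sum_eq_zero hrest] using congrArg (PowerSeries.coeff (j * N)) heq
    obtain ⟨w', rfl⟩ := PowerSeries.X_dvd_iff.mpr (IsReduced.eq_zero _ ⟨N, hw⟩)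
    exact ⟨w', by ring⟩

theorem MvPowerSeries.sub_C_constantCoeff_mem_span_X {σ : Type*} [CommRing R] [Fintype σ]
    [LinearOrder σ] (F : MvPowerSeries σ R) :
    F - C (constantCoeff F) ∈ Ideal.span (Set.range X) := by
  classical
  set G := F - C (constantCoeff F)
  have hG : constantCoeff G = 0 := by simp [G]
  -- sort the monomials of `G` by the least variable occurring in them
  let A : σ → MvPowerSeries σ R := fun i e => if e.support.min = i then coeff e G else 0
  have hcoeffA : ∀ i e, coeff e (A i) = if e.support.min = i then coeff e G else 0 :=
    fun _ _ => rfl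
  have hA : ∀ i, X i ∣ A i := fun i => X_dvd_iff.mpr fun e he =>
    if_neg fun h => Finsupp.mem_support_iff.mp (Finset.mem_of_min h) he
  have hGA : G = ∑ i, A i := by
    ext e
    rw [map_sum]
    rcases e.support.eq_empty_or_nonempty with he | he
    · obtain rfl : e = 0 := Finsupp.support_eq_empty.mp he
      simp [hcoeffA, hG]
    · obtain ⟨i, hi⟩ := Finset.min_of_nonempty he
      simp [hcoeffA, hi]
  rw [hGA]
  refine Ideal.sum_mem _ fun i _ => ?_
  obtain ⟨B, hB⟩ := hA i
  exact hB ▸ Ideal.mul_mem_right B _ (Ideal.subset_span ⟨i, rfl⟩)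

theorem MvPowerSeries.exists_sub_algebraMap_mem_span_X {σ k S : Type*} [CommRing k]
    [CommRing S] [Algebra k S] [Fintype σ] [LinearOrder σ] (f : MvPowerSeries σ k →ₐ[k] S)
    (hf : Function.Surjective f) (s : S) :
    ∃ c : k, s - algebraMap k S c ∈ Ideal.span (Set.range fun i => f (X i)) := by
  obtain ⟨F, rfl⟩ := hf s
  refine ⟨constantCoeff F, ?_⟩
  rw [← f.commutes, algebraMap_apply, Algebra.algebraMap_self, RingHom.id_apply, ← map_sub,
    Set.range_comp', ← Ideal.map_span]
  exact Ideal.mem_map_of_mem f (sub_C_constantCoeff_mem_span_X F)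

theorem mem_sup_pow_span_of_forall_sub_algebraMap_mem {k S : Type*} [CommRing k] [CommRing S]
    [Algebra k S] {T : Set S} (hS : ∀ s, ∃ c : k, s - algebraMap k S c ∈ Ideal.span T)
    {W : Submodule k S} (hW1 : 1 ∈ W) (hWT : ∀ t ∈ T, ∀ w ∈ W, t * w ∈ W) (D : ℕ)
    (s : S) :
    s ∈ W ⊔ (Ideal.span T ^ D).restrictScalars k := by
  induction D generalizing s with
  | zero => exact Submodule.mem_sup_right (by simp)
  | succ D ih =>
    obtain ⟨c, hc⟩ := hS s
    -- the target is not an ideal, so induct on `u ∈ span T` for all multiples `a * u` at once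
    have hmul : ∀ u ∈ Ideal.span T, ∀ a : S,
        a * u ∈ W ⊔ (Ideal.span T ^ (D + 1)).restrictScalars k := by
      intro u hu
      induction hu using Submodule.span_induction with
      | mem t ht =>
        intro a
        obtain ⟨w, hw, r, hr, rfl⟩ := Submodule.mem_sup.mp (ih a)
        rw [add_mul, mul_comm w, pow_succ]
        exact add_mem (Submodule.mem_sup_left (hWT t ht w hw))
          (Submodule.mem_sup_right (Ideal.mul_mem_mul hr (Ideal.subset_span ht)))
      | zero => simp
      | add u u' _ _ hu hu' => exact fun a => mul_add a u u' ▸ add_mem (hu a) (hu' a)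
      | smul b u _ hu => exact fun a => (mul_assoc a b u).symm ▸ hu (a * b)
    have hcW : algebraMap k S c ∈ W :=
      (Algebra.algebraMap_eq_smul_one (A := S) c).symm ▸ W.smul_mem c hW1
    simpa using add_mem (Submodule.mem_sup_left hcW) (hmul _ hc 1)

theorem eq_zero_of_mem_span_of_X_pow_dvd {k S ι : Type*} [CommRing k] [CommRing S]
    [Algebra k S] (g : S →ₐ[k] PowerSeries k) {b : ι → S} {v : ι → ℕ}
    (hv : Function.Injective v) (hgb : ∀ i, g (b i) = PowerSeries.X ^ v i) {N : ℕ} {u : S}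
    (hu : u ∈ Submodule.span k (b '' {i | v i < N})) (hdvd : PowerSeries.X ^ N ∣ g u) :
    u = 0 := by
  classical
  obtain ⟨c, hc, rfl⟩ := (Finsupp.mem_span_image_iff_linearCombination k).mp hu
  suffices c = 0 by simp [this]
  ext i
  by_cases hi : v i < N
  · simpa [Finsupp.linearCombination_apply, map_finsuppSum, hgb, PowerSeries.coeff_X_pow,
      hv.eq_iff] using PowerSeries.X_pow_dvd_iff.mp hdvd (v i) hi
  · exact Finsupp.notMem_support_iff.mp fun h => hi (hc h)

theorem intCl_le_of_forall_mem_span_sup {k S ι : Type*} [CommRing k] [IsReduced k]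
    [CommRing S] [Algebra k S] (g : S →ₐ[k] PowerSeries k) {b : ι → S} {v : ι → ℕ}
    (hv : Function.Injective v) (hgb : ∀ i, g (b i) = PowerSeries.X ^ v i) {I K : Ideal S}
    {N : ℕ} (hIK : I ≤ K) (hK : K.map g ≤ Ideal.span {PowerSeries.X ^ N})
    (hbK : ∀ i, N ≤ v i → b i ∈ K)
    (hspan : ∀ s, s ∈ Submodule.span k (Set.range b) ⊔ I.restrictScalars k) :
    intCl I ≤ K := by
  have hKdvd : ∀ s ∈ K, PowerSeries.X ^ N ∣ g s := fun s hs =>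
    Ideal.mem_span_singleton.mp (hK (Ideal.mem_map_of_mem g hs))
  rw [intCl, Ideal.span_le]
  intro s hs
  have hsN : PowerSeries.X ^ N ∣ g s := PowerSeries.X_pow_dvd_of_isIntegralOverIdeal
    ((IsIntegralOverIdeal.map g hs).mono ((Ideal.map_mono hIK).trans hK))
  have hrange : Submodule.span k (Set.range b) ≤
      Submodule.span k (b '' {i | v i < N}) ⊔ K.restrictScalars k := by
    rw [Submodule.span_le]
    rintro _ ⟨i, rfl⟩
    by_cases hi : v i < N
    · exact Submodule.mem_sup_left (Submodule.subset_span ⟨i, hi, rfl⟩)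
    · exact Submodule.mem_sup_right (hbK i (not_lt.mp hi))
  obtain ⟨u, hu, r, hr, rfl⟩ := Submodule.mem_sup.mp
    (sup_le hrange (le_sup_of_le_right (Submodule.restrictScalars_mono k hIK)) (hspan s))
  have hu0 : u = 0 := eq_zero_of_mem_span_of_X_pow_dvd g hv hgb hu
    ((dvd_add_left (hKdvd r hr)).mp (map_add g u r ▸ hsN))
  simpa [hu0] using hr

namespace Semigroup4511

section StandardMonomials

variable {S : Type*} [CommRing S] (x y z : S)

def standardMonomial (i : ℕ × Fin 4) : S := x ^ i.1 * ![1, y, y ^ 2, z] i.2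

def standardWeight (i : ℕ × Fin 4) : ℕ := 4 * i.1 + ![0, 5, 10, 11] i.2

theorem standardWeight_injective : Function.Injective standardWeight := by
  rintro ⟨a, r⟩ ⟨a', r'⟩ h
  simp only [standardWeight] at h
  fin_cases r <;> fin_cases r' <;> simp at h ⊢ <;> omega

theorem pow_mul_pow_mem_span_pow (a b : ℕ) : x ^ a * y ^ b ∈ Ideal.span {x, y, z} ^ (a + b) :=
  pow_add (Ideal.span {x, y, z}) a b ▸
    Ideal.mul_mem_mul (Ideal.pow_mem_pow (Ideal.subset_span (by simp)) a)
      (Ideal.pow_mem_pow (Ideal.subset_span (by simp)) b)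

variable {x y z}

theorem map_standardMonomial {T F : Type*} [CommRing T] [FunLike F S T] [RingHomClass F S T]
    (g : F) {t : T} (hx : g x = t ^ 4) (hy : g y = t ^ 5) (hz : g z = t ^ 11) (i : ℕ × Fin 4) :
    g (standardMonomial x y z i) = t ^ standardWeight i := by
  obtain ⟨a, r⟩ := i
  fin_cases r <;> simp [standardMonomial, standardWeight, hx, hy, hz] <;> ring

theorem exists_mul_standardMonomial (hz2 : z ^ 2 = x ^ 3 * y ^ 2) (hy3 : y ^ 3 = x * z)
    (hx4 : x ^ 4 = y * z) : ∀ s ∈ ({x, y, z} : Set S), ∀ i,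
      ∃ j, s * standardMonomial x y z i = standardMonomial x y z j := by
  rintro s (rfl | rfl | rfl) ⟨a, r⟩
  · exact ⟨(a + 1, r), by simp only [standardMonomial]; ring⟩
  · fin_cases r <;> simp only [standardMonomial]
    exacts [⟨(a, 1), by simp; ring⟩, ⟨(a, 2), by simp; ring⟩,
      ⟨(a + 1, 3), by simp; linear_combination x ^ a * hy3⟩,
      ⟨(a + 4, 0), by simp; linear_combination -x ^ a * hx4⟩]
  · fin_cases r <;> simp only [standardMonomial]
    exacts [⟨(a, 3), by simp; ring⟩, ⟨(a + 4, 0), by simp; linear_combination -x ^ a * hx4⟩,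
      ⟨(a + 4, 1), by simp; linear_combination -x ^ a * y * hx4⟩,
      ⟨(a + 3, 2), by simp; linear_combination x ^ a * hz2⟩]

theorem standardMonomial_mem_span_pow (hy3 : y ^ 3 = x * z) {n : ℕ} (hn : 3 ≤ n)
    {i : ℕ × Fin 4} (hi : 4 * n ≤ standardWeight i) :
    standardMonomial x y z i ∈ Ideal.span {x, y, z} ^ n := by
  obtain ⟨a, r⟩ := i
  fin_cases r <;> simp [standardWeight, standardMonomial] at hi ⊢
  · simpa using Ideal.pow_le_pow_right (by omega) (pow_mul_pow_mem_span_pow x y z a 0)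
  · simpa using Ideal.pow_le_pow_right (by omega) (pow_mul_pow_mem_span_pow x y z a 1)
  · exact Ideal.pow_le_pow_right (by omega) (pow_mul_pow_mem_span_pow x y z a 2)
  · -- `xᵃz = xᵃ⁻¹y³` has degree `a + 2`, which reaches `n` since `a ≥ n - 2 ≥ 1`
    obtain ⟨a, rfl⟩ : ∃ a', a = a' + 1 := ⟨a - 1, by omega⟩
    rw [pow_succ, mul_assoc, ← hy3]
    exact Ideal.pow_le_pow_right (by omega) (pow_mul_pow_mem_span_pow x y z a 3)

theorem standardMonomial_mem_span_sq_sup {i : ℕ × Fin 4} (hi : 8 ≤ standardWeight i) :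
    standardMonomial x y z i ∈ Ideal.span {x, y, z} ^ 2 ⊔ Ideal.span {z} := by
  obtain ⟨a, r⟩ := i
  fin_cases r <;> simp [standardWeight, standardMonomial] at hi ⊢
  · have h := Ideal.pow_le_pow_right (m := 2) (by omega) (pow_mul_pow_mem_span_pow x y z a 0)
    exact Ideal.mem_sup_left (by simpa using h)
  · have h := Ideal.pow_le_pow_right (m := 2) (by omega) (pow_mul_pow_mem_span_pow x y z a 1)
    exact Ideal.mem_sup_left (by simpa using h)
  · exact Ideal.mem_sup_left
      (Ideal.pow_le_pow_right (by omega) (pow_mul_pow_mem_span_pow x y z a 2))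
  · exact Ideal.mem_sup_right (Ideal.mul_mem_left _ _ (Ideal.mem_span_singleton_self z))

theorem mem_intCl_span_sq (hz2 : z ^ 2 = x ^ 3 * y ^ 2) :
    z ∈ intCl (Ideal.span {x, y, z} ^ 2) := by
  refine Ideal.subset_span (IsIntegralOverIdeal.of_pow_mem two_pos ?_)
  rw [hz2, ← pow_mul]
  exact Ideal.pow_le_pow_right (by norm_num) (pow_mul_pow_mem_span_pow x y z 3 2)

theorem map_span_pow_le {T F : Type*} [CommRing T] [FunLike F S T] [RingHomClass F S T]
    (g : F) {t : T} (hx : g x = t ^ 4) (hy : g y = t ^ 5) (hz : g z = t ^ 11) (n : ℕ) :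
    (Ideal.span {x, y, z} ^ n).map g ≤ Ideal.span {t ^ (4 * n)} := by
  have h : (Ideal.span {x, y, z}).map g ≤ Ideal.span {t ^ 4} := by
    rw [Ideal.map_span, Ideal.span_le]
    rintro _ ⟨s, hs, rfl⟩
    rcases hs with rfl | rfl | rfl <;>
      simp only [hx, hy, hz, SetLike.mem_coe, Ideal.mem_span_singleton] <;>
      exact pow_dvd_pow t (by norm_num)
  rw [Ideal.map_pow, pow_mul, ← Ideal.span_singleton_pow]
  exact Ideal.pow_right_mono h n

theorem mem_span_standardMonomial_sup_pow {k : Type*} [CommRing k] [Algebra k S]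
    (hS : ∀ s, ∃ c : k, s - algebraMap k S c ∈ Ideal.span {x, y, z})
    (hz2 : z ^ 2 = x ^ 3 * y ^ 2) (hy3 : y ^ 3 = x * z) (hx4 : x ^ 4 = y * z) (D : ℕ) (s : S) :
    s ∈ Submodule.span k (Set.range (standardMonomial x y z)) ⊔
      (Ideal.span {x, y, z} ^ D).restrictScalars k := by
  refine mem_sup_pow_span_of_forall_sub_algebraMap_mem hS ?_ (fun t ht w hw => ?_) D s
  · exact Submodule.subset_span ⟨(0, 0), by simp [standardMonomial]⟩
  induction hw using Submodule.span_induction with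
  | mem w hw =>
    obtain ⟨i, rfl⟩ := hw
    obtain ⟨j, hj⟩ := exists_mul_standardMonomial hz2 hy3 hx4 t ht i
    exact Submodule.subset_span ⟨j, hj.symm⟩
  | zero => simp
  | add u w _ _ hu hw => exact mul_add t u w ▸ add_mem hu hw
  | smul c w _ hw => exact (mul_smul_comm c t w).symm ▸ Submodule.smul_mem _ c hw

end StandardMonomials

def relations (k : Type*) [CommRing k] : Set (MvPowerSeries (Fin 3) k) :=
  {MvPowerSeries.X 2 ^ 2 - MvPowerSeries.X 0 ^ 3 * MvPowerSeries.X 1 ^ 2,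
    MvPowerSeries.X 1 ^ 3 - MvPowerSeries.X 0 * MvPowerSeries.X 2,
    MvPowerSeries.X 0 ^ 4 - MvPowerSeries.X 1 * MvPowerSeries.X 2}

theorem map_X_of_span_relations_le_ker {k S F : Type*} [CommRing k] [CommRing S]
    [FunLike F (MvPowerSeries (Fin 3) k) S] [RingHomClass F (MvPowerSeries (Fin 3) k) S] {f : F}
    (h : Ideal.span (relations k) ≤ RingHom.ker f) :
    f (MvPowerSeries.X 2) ^ 2 = f (MvPowerSeries.X 0) ^ 3 * f (MvPowerSeries.X 1) ^ 2 ∧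
      f (MvPowerSeries.X 1) ^ 3 = f (MvPowerSeries.X 0) * f (MvPowerSeries.X 2) ∧
      f (MvPowerSeries.X 0) ^ 4 = f (MvPowerSeries.X 1) * f (MvPowerSeries.X 2) := by
  have hrel : ∀ p ∈ relations k, f p = 0 := fun p hp => h (Ideal.subset_span hp)
  simpa only [relations, Set.mem_insert_iff, Set.mem_singleton_iff, forall_eq_or_imp,
    forall_eq, map_sub, map_pow, map_mul, sub_eq_zero] using hrel

theorem exists_algHom_powerSeries_of_ker_le {k S : Type*} [CommRing k] [CommRing S]
    [Algebra k S] (f : MvPowerSeries (Fin 3) k →ₐ[k] S) (hf : Function.Surjective f)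
    (hker : RingHom.ker f.toRingHom ≤ Ideal.span (relations k)) :
    ∃ g : S →ₐ[k] PowerSeries k, g (f (MvPowerSeries.X 0)) = PowerSeries.X ^ 4 ∧
      g (f (MvPowerSeries.X 1)) = PowerSeries.X ^ 5 ∧
      g (f (MvPowerSeries.X 2)) = PowerSeries.X ^ 11 := by
  have hX : MvPowerSeries.constantCoeff (PowerSeries.X : PowerSeries k) = 0 :=
    PowerSeries.constantCoeff_X
  have ha : MvPowerSeries.HasSubst (![PowerSeries.X ^ 4, PowerSeries.X ^ 5, PowerSeries.X ^ 11] :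
      Fin 3 → PowerSeries k) :=
    MvPowerSeries.hasSubst_of_constantCoeff_zero fun i => by fin_cases i <;> simp [hX]
  refine ⟨f.liftOfSurjective hf (MvPowerSeries.substAlgHom ha) (hker.trans ?_), ?_⟩
  · rw [Ideal.span_le]
    rintro _ (rfl | rfl | rfl) <;>
      simp only [SetLike.mem_coe, RingHom.mem_ker, AlgHom.toRingHom_eq_coe, RingHom.coe_coe,
        map_sub, map_pow, map_mul, MvPowerSeries.substAlgHom_X] <;> simp <;> ring
  · simp [MvPowerSeries.subst_X ha]

end Semigroup4511

open Semigroup4511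

theorem normal_powers_of_semigroup_ring_general
    (k : Type*) [Field k]
    (S : Type*) [CommRing S]
    (f : MvPowerSeries (Fin 3) k →+* S)
    (hf : Function.Surjective f)
    (hker : RingHom.ker f = Ideal.span
      ({ (MvPowerSeries.X 2) ^ 2 - (MvPowerSeries.X 0) ^ 3 * (MvPowerSeries.X 1) ^ 2,
         (MvPowerSeries.X 1) ^ 3 - (MvPowerSeries.X 0) * (MvPowerSeries.X 2),
         (MvPowerSeries.X 0) ^ 4 - (MvPowerSeries.X 1) * (MvPowerSeries.X 2) } :
        Set (MvPowerSeries (Fin 3) k)))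
    (x y z : S)
    (hx : x = f (MvPowerSeries.X 0)) (hy : y = f (MvPowerSeries.X 1))
    (hz : z = f (MvPowerSeries.X 2))
    (m : Ideal S) (hm : m = Ideal.span {x, y, z}) :
    intCl (m ^ 2) = m ^ 2 ⊔ Ideal.span {z} ∧
      ∀ n : ℕ, 3 ≤ n → intCl (m ^ n) = m ^ n := by
  let : Algebra k S := (f.comp MvPowerSeries.C).toAlgebra
  let fₐ : MvPowerSeries (Fin 3) k →ₐ[k] S := { f with commutes' := fun _ => rfl }
  obtain ⟨rfl, rfl, rfl⟩ : fₐ (MvPowerSeries.X 0) = x ∧ fₐ (MvPowerSeries.X 1) = y ∧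
    fₐ (MvPowerSeries.X 2) = z := ⟨hx.symm, hy.symm, hz.symm⟩
  subst hm
  obtain ⟨hz2, hy3, hx4⟩ := map_X_of_span_relations_le_ker (f := fₐ) hker.ge
  obtain ⟨g, hgx, hgy, hgz⟩ := exists_algHom_powerSeries_of_ker_le fₐ hf hker.le
  have hspan := mem_span_standardMonomial_sup_pow
    (by simpa [Set.range, Fin.exists_fin_succ, Set.insert_def, eq_comm] using
      MvPowerSeries.exists_sub_algebraMap_mem_span_X fₐ hf) hz2 hy3 hx4
  have hgb := map_standardMonomial g hgx hgy hgz
  have hgm := map_span_pow_le g hgx hgy hgz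
  refine ⟨le_antisymm ?_ (sup_le (le_intCl _) ?_), fun n hn => le_antisymm ?_ (le_intCl _)⟩
  · refine intCl_le_of_forall_mem_span_sup g standardWeight_injective hgb le_sup_left ?_
      (fun _ => standardMonomial_mem_span_sq_sup) (hspan 2)
    rw [Ideal.map_sup, Ideal.map_span, Set.image_singleton, hgz]
    exact sup_le (hgm 2) (Ideal.span_singleton_le_span_singleton.mpr (pow_dvd_pow _ (by norm_num)))
  · exact (Ideal.span_singleton_le_iff_mem _).mpr (mem_intCl_span_sq hz2)
  · exact intCl_le_of_forall_mem_span_sup g standardWeight_injective hgb le_rfl (hgm n)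
      (fun _ => standardMonomial_mem_span_pow hy3 hn) (hspan n)

theorem normal_powers_of_semigroup_ring
    (k : Type*) [Field k]
    (S : Type*) [CommRing S]
    (f : MvPowerSeries (Fin 3) k →+* S)
    (hf : Function.Surjective f)
    (hker : RingHom.ker f = Ideal.span
      ({ (MvPowerSeries.X 2) ^ 2 - (MvPowerSeries.X 0) ^ 3 * (MvPowerSeries.X 1) ^ 2,
         (MvPowerSeries.X 1) ^ 3 - (MvPowerSeries.X 0) * (MvPowerSeries.X 2),
         (MvPowerSeries.X 0) ^ 4 - (MvPowerSeries.X 1) * (MvPowerSeries.X 2) } :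
        Set (MvPowerSeries (Fin 3) k)))
    (x y z : S)
    (hx : x = f (MvPowerSeries.X 0)) (hy : y = f (MvPowerSeries.X 1))
    (hz : z = f (MvPowerSeries.X 2))
    (m : Ideal S) (hm : m = Ideal.span {x, y, z})
    (hmax : ∀ u : S, u ∈ m ↔ ¬ IsUnit u) :
    intCl (m ^ 2) = m ^ 2 ⊔ Ideal.span {z} ∧
      ∀ n : ℕ, 3 ≤ n → intCl (m ^ n) = m ^ n :=
  normal_powers_of_semigroup_ring_general k S f hf hker x y z hx hy hz m hm
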